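/- arXiv:2506.08611 — 2 statements merged into one kernel-verified Lean document; each statement's English description precedes it below -/
import Mathlib

section
/- Let n ≥ 1 and z : Fin n → ℝ, and define M : ℝ → ℝ by M(β) = ∑_i softmax(β·z)_i · z_i (the softmax-weighted mean of the logits at inverse temperature β). Then M is monotone nondecreasing on ℝ, and strictly increasing if z is not constant (i.e., there exist i, j with z i ≠ z j). -/
open Real Set

/-- Softmax of a logit vector `w`. -/
noncomputable def softmax {n : ℕ} (w : Fin n → ℝ) (i : Fin n) : ℝ :=
  Real.exp (w i) / ∑ j, Real.exp (w j)

noncomputable def smS {n : ℕ} (z : Fin n → ℝ) (β : ℝ) : ℝ := ∑ j, Real.exp (β * z j)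
noncomputable def smN {n : ℕ} (z : Fin n → ℝ) (β : ℝ) : ℝ := ∑ j, Real.exp (β * z j) * z j

lemma smS_pos {n : ℕ} (hn : 1 ≤ n) (z : Fin n → ℝ) (β : ℝ) : 0 < smS z β := by
  have : Nonempty (Fin n) := Fin.pos_iff_nonempty.mp hn
  exact Finset.sum_pos (fun j _ => Real.exp_pos _) Finset.univ_nonempty

lemma sm_key {n : ℕ} (z : Fin n → ℝ) (a b : ℝ) :
    2 * (smS z a * smN z b - smS z b * smN z a) =
      ∑ i, ∑ j, (Real.exp (b * z i + a * z j) - Real.exp (a * z i + b * z j)) * (z i - z j) := by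
  have h : ∀ i j : Fin n,
      (Real.exp (b * z i + a * z j) - Real.exp (a * z i + b * z j)) * (z i - z j) =
        (Real.exp (b * z i) * z i) * Real.exp (a * z j)
        - (Real.exp (a * z i) * z i) * Real.exp (b * z j)
        - Real.exp (b * z i) * (Real.exp (a * z j) * z j)
        + Real.exp (a * z i) * (Real.exp (b * z j) * z j) := by
    intro i j; rw [Real.exp_add, Real.exp_add]; ring
  simp only [h, Finset.sum_add_distrib, Finset.sum_sub_distrib, ← Finset.sum_mul,
    ← Finset.mul_sum, smS, smN]
  ring

lemma sm_term_nonneg {n : ℕ} (z : Fin n → ℝ) {a b : ℝ} (hab : a ≤ b) (i j : Fin n) :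
    0 ≤ (Real.exp (b * z i + a * z j) - Real.exp (a * z i + b * z j)) * (z i - z j) := by
  rcases le_total (z i) (z j) with h | h
  · have h1 : Real.exp (b * z i + a * z j) ≤ Real.exp (a * z i + b * z j) :=
      Real.exp_le_exp.mpr (by nlinarith)
    nlinarith
  · have h1 : Real.exp (a * z i + b * z j) ≤ Real.exp (b * z i + a * z j) :=
      Real.exp_le_exp.mpr (by nlinarith)
    nlinarith

lemma sm_term_pos {n : ℕ} (z : Fin n → ℝ) {a b : ℝ} (hab : a < b) {i j : Fin n}
    (hij : z i ≠ z j) :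
    0 < (Real.exp (b * z i + a * z j) - Real.exp (a * z i + b * z j)) * (z i - z j) := by
  rcases lt_or_gt_of_ne hij with h | h
  · apply mul_pos_of_neg_of_neg
    · simp only [sub_neg]
      exact Real.exp_lt_exp.mpr (by nlinarith)
    · linarith
  · apply mul_pos
    · simp only [sub_pos]
      exact Real.exp_lt_exp.mpr (by nlinarith)
    · linarith

lemma sm_val {n : ℕ} (z : Fin n → ℝ) (β : ℝ) :
    (∑ i, softmax (fun k => β * z k) i * z i) = smN z β / smS z β := by
  simp only [softmax, smN, smS, Finset.sum_div]
  exact Finset.sum_congr rfl fun i _ => by ring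

theorem softmax_weighted_mean_monotone
    (n : ℕ) (hn : 1 ≤ n) (z : Fin n → ℝ) :
    Monotone (fun β : ℝ => ∑ i, softmax (fun k => β * z k) i * z i) ∧
    ((∃ i j, z i ≠ z j) →
      StrictMono (fun β : ℝ => ∑ i, softmax (fun k => β * z k) i * z i)) := by
  constructor
  · intro a b hab
    simp only [sm_val]
    rw [div_le_div_iff₀ (smS_pos hn z a) (smS_pos hn z b)]
    have h := sm_key z a b
    have h2 : 0 ≤ ∑ i, ∑ j, (Real.exp (b * z i + a * z j) - Real.exp (a * z i + b * z j)) * (z i - z j) :=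
      Finset.sum_nonneg fun i _ => Finset.sum_nonneg fun j _ => sm_term_nonneg z hab i j
    nlinarith
  · rintro ⟨i0, j0, hij⟩ a b hab
    simp only [sm_val]
    rw [div_lt_div_iff₀ (smS_pos hn z a) (smS_pos hn z b)]
    have h := sm_key z a b
    have h2 : 0 < ∑ i, ∑ j, (Real.exp (b * z i + a * z j) - Real.exp (a * z i + b * z j)) * (z i - z j) := by
      apply Finset.sum_pos' (fun i _ => Finset.sum_nonneg fun j _ => sm_term_nonneg z hab.le i j)
      refine ⟨i0, Finset.mem_univ _, ?_⟩
      apply Finset.sum_pos' (fun j _ => sm_term_nonneg z hab.le i0 j)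
      exact ⟨j0, Finset.mem_univ _, sm_term_pos z hab hij⟩
    nlinarith
end

section
/- Let n ≥ 1 and z : Fin n → ℝ be not constant (there exist i, j with z i ≠ z j). Then the map τ ↦ H(softmaxτ(z, τ)) is strictly monotone increasing on (0, ∞): raising the temperature strictly increases the smoothness (Shannon entropy) of the soft label. -/
/-!
Write `p` and `q` for the softmax distributions at temperatures `a < b`, and `m_p`, `m_q` for
the means of `z` under them. Since `log p_i = z_i / a - log Z_a` with
`Z_τ = ∑ j, exp (z_j / τ)`, every cross entropy `∑ r_i log p_i` of a probability vector `r`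
is affine in the mean of `z` under `r`. Gibbs' inequality `∑ p log q < ∑ p log p` for
`p ≠ q`, applied in both directions, gives `(m_p - m_q) (1/a - 1/b) > 0`, so `m_q < m_p`.
Applied once more it gives `H(p) < log Z_b - m_p / b ≤ log Z_b - m_q / b = H(q)`.
-/

open Real Set

/-- Tempered softmax of logits `z` at temperature `τ`. -/
noncomputable def softmaxT {n : ℕ} (z : Fin n → ℝ) (τ : ℝ) (i : Fin n) : ℝ :=
  Real.exp (z i / τ) / ∑ j, Real.exp (z j / τ)

open Finset

theorem mul_log_div_le_sub {x y : ℝ} (hx : 0 < x) (hy : 0 < y) : x * log (y / x) ≤ y - x :=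
  calc x * log (y / x) ≤ x * (y / x - 1) :=
        mul_le_mul_of_nonneg_left (log_le_sub_one_of_pos (div_pos hy hx)) hx.le
    _ = y - x := by rw [mul_sub, mul_div_cancel₀ _ hx.ne', mul_one]

theorem mul_log_div_lt_sub {x y : ℝ} (hx : 0 < x) (hy : 0 < y) (hxy : x ≠ y) :
    x * log (y / x) < y - x :=
  calc x * log (y / x) < x * (y / x - 1) :=
        mul_lt_mul_of_pos_left (log_lt_sub_one_of_pos (div_pos hy hx)
          ((div_eq_one_iff_eq hx.ne').not.mpr hxy.symm)) hx
    _ = y - x := by rw [mul_sub, mul_div_cancel₀ _ hx.ne', mul_one]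

theorem sum_mul_log_lt_sum_mul_log {ι : Type*} [Fintype ι] {p q : ι → ℝ}
    (hp : ∀ i, 0 < p i) (hq : ∀ i, 0 < q i) (hpq : ∑ i, p i = ∑ i, q i) (hne : p ≠ q) :
    ∑ i, p i * log (q i) < ∑ i, p i * log (p i) := by
  have term_eq : ∀ i, p i * log (q i) - p i * log (p i) = p i * log (q i / p i) := fun i => by
    rw [log_div (hq i).ne' (hp i).ne']
    ring
  obtain ⟨k, hk⟩ := Function.ne_iff.mp hne
  have := sum_lt_sum (s := Finset.univ)
    (fun i _ => (term_eq i).trans_le (mul_log_div_le_sub (hp i) (hq i)))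
    ⟨k, Finset.mem_univ k, (term_eq k).trans_lt (mul_log_div_lt_sub (hp k) (hq k) hk)⟩
  rw [sum_sub_distrib, sum_sub_distrib, hpq, sub_self] at this
  linarith

theorem sum_exp_pos {ι : Type*} [Fintype ι] [Nonempty ι] (f : ι → ℝ) : 0 < ∑ i, exp (f i) :=
  sum_pos (fun i _ => exp_pos (f i)) Finset.univ_nonempty

section softmaxT

variable {n : ℕ} (z : Fin n → ℝ)

theorem softmaxT_pos (τ : ℝ) (i : Fin n) : 0 < softmaxT z τ i :=
  have : Nonempty (Fin n) := ⟨i⟩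
  div_pos (exp_pos _) (sum_exp_pos _)

theorem sum_softmaxT [Nonempty (Fin n)] (τ : ℝ) : ∑ i, softmaxT z τ i = 1 := by
  simp only [softmaxT]
  rw [← sum_div, div_self (sum_exp_pos _).ne']

theorem log_softmaxT (τ : ℝ) (i : Fin n) :
    log (softmaxT z τ i) = z i / τ - log (∑ j, exp (z j / τ)) := by
  have : Nonempty (Fin n) := ⟨i⟩
  rw [softmaxT, log_div (exp_ne_zero _) (sum_exp_pos _).ne', log_exp]

theorem sum_mul_log_softmaxT (τ : ℝ) (r : Fin n → ℝ) :
    ∑ i, r i * log (softmaxT z τ i)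
      = (∑ i, r i * z i) / τ - (∑ i, r i) * log (∑ j, exp (z j / τ)) := by
  simp only [log_softmaxT, sum_div, sum_mul, ← sum_sub_distrib]
  exact sum_congr rfl fun i _ => by ring

variable {z}

theorem softmaxT_ne (hz : ∃ i j, z i ≠ z j) {a b : ℝ} (hab : a ≠ b) :
    softmaxT z a ≠ softmaxT z b := by
  intro h
  obtain ⟨i, j, hij⟩ := hz
  have hi := congrArg log (congrFun h i)
  have hj := congrArg log (congrFun h j)
  rw [log_softmaxT, log_softmaxT] at hi hj
  have : (z i - z j) * (a⁻¹ - b⁻¹) = 0 := by linear_combination hi - hj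
  rcases mul_eq_zero.mp this with h | h
  · exact hij (sub_eq_zero.mp h)
  · exact hab (inv_injective (sub_eq_zero.mp h))

theorem strictAntiOn_sum_softmaxT_mul (hz : ∃ i j, z i ≠ z j) :
    StrictAntiOn (fun τ => ∑ i, softmaxT z τ i * z i) (Ioi 0) := by
  intro a ha b _ hab
  have : Nonempty (Fin n) := let ⟨i, _⟩ := hz; ⟨i⟩
  have hsum : ∑ i, softmaxT z a i = ∑ i, softmaxT z b i := by rw [sum_softmaxT, sum_softmaxT]
  have gibbs_ab := sum_mul_log_lt_sum_mul_log (softmaxT_pos z a) (softmaxT_pos z b) hsum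
    (softmaxT_ne hz hab.ne)
  have gibbs_ba := sum_mul_log_lt_sum_mul_log (softmaxT_pos z b) (softmaxT_pos z a) hsum.symm
    (softmaxT_ne hz hab.ne')
  simp only [sum_mul_log_softmaxT, sum_softmaxT] at gibbs_ab gibbs_ba
  have key : 0 < (∑ i, softmaxT z a i * z i - ∑ i, softmaxT z b i * z i) * (a⁻¹ - b⁻¹) := by
    linear_combination gibbs_ab + gibbs_ba
  exact sub_pos.mp (pos_of_mul_pos_left key (sub_pos.mpr (inv_strictAnti₀ ha hab)).le)

end softmaxT

theorem entropy_of_softmaxT_strictMonoOn_general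
    (n : ℕ) (z : Fin n → ℝ) (hne : ∃ i j, z i ≠ z j) :
    StrictMonoOn
      (fun τ : ℝ => -∑ i, softmaxT z τ i * Real.log (softmaxT z τ i))
      (Set.Ioi 0) := by
  intro a ha b hb hab
  have : Nonempty (Fin n) := let ⟨i, _⟩ := hne; ⟨i⟩
  have gibbs := sum_mul_log_lt_sum_mul_log (softmaxT_pos z a) (softmaxT_pos z b)
    (by rw [sum_softmaxT, sum_softmaxT]) (softmaxT_ne hne hab.ne)
  have mean_le := div_lt_div_of_pos_right (strictAntiOn_sum_softmaxT_mul hne ha hb hab) hb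
  simp only [sum_mul_log_softmaxT, sum_softmaxT] at gibbs ⊢
  linarith

theorem entropy_of_softmaxT_strictMonoOn
    (n : ℕ) (hn : 1 ≤ n) (z : Fin n → ℝ) (hne : ∃ i j, z i ≠ z j) :
    StrictMonoOn
      (fun τ : ℝ => -∑ i, softmaxT z τ i * Real.log (softmaxT z τ i))
      (Set.Ioi 0) :=
  entropy_of_softmaxT_strictMonoOn_general n z hne
end
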